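/- arXiv:2012.11092 — 4 statements merged into one kernel-verified Lean document; each statement's English description precedes it below -/
import Mathlib

section
/- Let v : [0,∞) → X be differentiable at t with v(t) ≠ 0. Then the upper right Dini derivative of t ↦ ‖v(t)‖ at t equals [v'(t), v(t)] / ‖v(t)‖, where [·,·] is the right semi-inner-product. Equivalently, ‖v(t)‖² · D⁺_t‖v(t)‖ = [v'(t), v(t)] · ‖v(t)‖. -/
/-!
For `ε > 0` let `g_ε(u) = (‖w + ε • u‖ - ‖w‖) / ε`. Convexity of `ε ↦ ‖w + ε • u‖` makes `g_ε(u)`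
monotone in `ε` and bounded below by `-‖u‖`, so it has a limit as `ε → 0⁺`, and `sip u w` is this
limit times `‖w‖`. Writing `v (t + ε) = v t + ε • q ε` with `q ε → v'`, the Dini quotient of
`‖v‖` at `t` is `g_ε(q ε)`, and since `g_ε` is `1`-Lipschitz it has the same limit as `g_ε(v')`.
-/

open Filter Topology

/-- Right defined semi-inner-product. -/
noncomputable def sip {X : Type*} [NormedAddCommGroup X] [NormedSpace ℝ X] (u v : X) : ℝ :=
  (limUnder (𝓝[>] (0 : ℝ)) fun ε : ℝ => (‖v + ε • u‖ - ‖v‖) / ε) * ‖v‖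

/-- Upper right Dini derivative `D⁺_t f(t) = limsup_{ε→0⁺} (f(t+ε)-f(t))/ε`. -/
noncomputable def diniDeriv (f : ℝ → ℝ) (t : ℝ) : ℝ :=
  limsup (fun ε : ℝ => (f (t + ε) - f t) / ε) (𝓝[>] (0 : ℝ))

open Set

section NormSlope

variable {X : Type*} [NormedAddCommGroup X] [NormedSpace ℝ X]

lemma convexOn_norm_add_smul (u w : X) : ConvexOn ℝ univ fun ε : ℝ => ‖w + ε • u‖ := by
  have h := convexOn_univ_norm.comp_affineMap (AffineMap.lineMap w (w + u))
  have hline : norm ∘ AffineMap.lineMap w (w + u) = fun ε : ℝ => ‖w + ε • u‖ := by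
    funext ε
    simp [AffineMap.lineMap_apply, add_comm]
  rwa [hline, preimage_univ] at h

lemma monotoneOn_norm_add_smul_slope (u w : X) :
    MonotoneOn (fun ε : ℝ => (‖w + ε • u‖ - ‖w‖) / ε) (Ioi 0) := by
  intro a ha b hb hab
  simpa using (convexOn_norm_add_smul u w).secant_mono (a := 0) (mem_univ _) (mem_univ _)
    (mem_univ _) (ne_of_gt ha) (ne_of_gt hb) hab

lemma neg_norm_le_norm_add_smul_slope (u w : X) {ε : ℝ} (hε : 0 < ε) :
    -‖u‖ ≤ (‖w + ε • u‖ - ‖w‖) / ε := by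
  have h := norm_sub_norm_le w (w + ε • u)
  rw [sub_add_cancel_left, norm_neg, norm_smul, Real.norm_of_nonneg hε.le] at h
  rw [le_div_iff₀ hε]
  linarith

lemma exists_tendsto_norm_add_smul_slope (u w : X) :
    ∃ L : ℝ, Tendsto (fun ε : ℝ => (‖w + ε • u‖ - ‖w‖) / ε) (𝓝[>] 0) (𝓝 L) := by
  refine ⟨_, (monotoneOn_norm_add_smul_slope u w).tendsto_nhdsGT ⟨-‖u‖, ?_⟩⟩
  rintro _ ⟨ε, hε, rfl⟩
  exact neg_norm_le_norm_add_smul_slope u w hε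

lemma abs_norm_add_smul_slope_sub_le (u u' w : X) {ε : ℝ} (hε : 0 < ε) :
    |(‖w + ε • u‖ - ‖w‖) / ε - (‖w + ε • u'‖ - ‖w‖) / ε| ≤ ‖u - u'‖ := by
  have h := abs_norm_sub_norm_le (w + ε • u) (w + ε • u')
  rw [add_sub_add_left_eq_sub, ← smul_sub, norm_smul, Real.norm_of_nonneg hε.le] at h
  rw [← sub_div, sub_sub_sub_cancel_right, abs_div, abs_of_pos hε, div_le_iff₀ hε]
  linarith

lemma HasDerivAt.tendsto_norm_slope {v : ℝ → X} {v' : X} {t L : ℝ} (hv : HasDerivAt v v' t)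
    (hL : Tendsto (fun ε : ℝ => (‖v t + ε • v'‖ - ‖v t‖) / ε) (𝓝[>] 0) (𝓝 L)) :
    Tendsto (fun ε : ℝ => (‖v (t + ε)‖ - ‖v t‖) / ε) (𝓝[>] 0) (𝓝 L) := by
  set q : ℝ → X := fun ε => ε⁻¹ • (v (t + ε) - v t)
  have hq : Tendsto q (𝓝[>] 0) (𝓝 v') :=
    (hasDerivAt_iff_tendsto_slope_zero.mp hv).mono_left (nhdsWithin_mono _ fun _ h => ne_of_gt h)
  have hdiff : Tendsto (fun ε : ℝ => (‖v t + ε • q ε‖ - ‖v t‖) / ε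
      - (‖v t + ε • v'‖ - ‖v t‖) / ε) (𝓝[>] 0) (𝓝 0) := by
    refine squeeze_zero_norm' ?_ (by simpa using (tendsto_sub_nhds_zero_iff.mpr hq).norm)
    filter_upwards [self_mem_nhdsWithin] with ε hε
    exact abs_norm_add_smul_slope_sub_le _ _ _ hε
  refine (by simpa using hdiff.add hL : Tendsto _ _ (𝓝 L)).congr' ?_
  filter_upwards [self_mem_nhdsWithin] with ε (hε : 0 < ε)
  simp [q, smul_smul, hε.ne']

end NormSlope

theorem dini_deriv_norm_eq_general {X : Type*} [NormedAddCommGroup X] [NormedSpace ℝ X]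
    (v : ℝ → X) (t : ℝ) (v' : X) (hv : HasDerivAt v v' t)
    (hne : v t ≠ 0) :
    diniDeriv (fun s => ‖v s‖) t = sip v' (v t) / ‖v t‖ ∧
      ‖v t‖ ^ 2 * diniDeriv (fun s => ‖v s‖) t = sip v' (v t) * ‖v t‖ := by
  obtain ⟨L, hL⟩ := exists_tendsto_norm_add_smul_slope v' (v t)
  have hdini : diniDeriv (fun s => ‖v s‖) t = L := (hv.tendsto_norm_slope hL).limsup_eq
  have hsip : sip v' (v t) = L * ‖v t‖ := by rw [sip, hL.limUnder_eq]
  have hnorm : ‖v t‖ ≠ 0 := norm_ne_zero_iff.mpr hne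
  rw [hdini, hsip]
  constructor
  · field_simp
  · ring

theorem dini_deriv_norm_eq {X : Type*} [NormedAddCommGroup X] [NormedSpace ℝ X]
    (v : ℝ → X) (t : ℝ) (ht : 0 ≤ t) (v' : X) (hv : HasDerivAt v v' t)
    (hne : v t ≠ 0) :
    diniDeriv (fun s => ‖v s‖) t = sip v' (v t) / ‖v t‖ ∧
      ‖v t‖ ^ 2 * diniDeriv (fun s => ‖v s‖) t = sip v' (v t) * ‖v t‖ :=
  dini_deriv_norm_eq_general v t v' hv hne
end

section
/- Let α ∈ (0,1] and λ ∈ ℂ. For all z ∈ (0,∞), d/dz E_{α,1}(λ z^α) = λ z^{α−1} E_{α,α}(λ z^α). -/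
/-- Two-parameter Mittag-Leffler function. -/
noncomputable def mittagLeffler (α β z : ℂ) : ℂ :=
  ∑' k : ℕ, z ^ k / Complex.Gamma (β + α * k)

/-!
Differentiating termwise, `E_{α,1}'(w) = ∑ (k + 1) w^k / Γ(1 + α(k + 1)) = E_{α,α}(w) / α`,
since `Γ(1 + s) = s Γ(s)` for `s = α(k + 1)`; the chain rule with `(λ t^α)' = αλ t^(α-1)` then
gives the claim. Termwise differentiation is justified because `∑ r^k / Γ(β + αk)` converges for
every `r`: log-convexity of `Γ` gives `Γ(x) / Γ(x + α) ≤ (x - 1)^(-α) → 0`, so the ratio test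
applies.
-/

open Real Filter Topology

namespace Real

theorem rpow_mul_Gamma_le_Gamma_add {x a : ℝ} (hx : 0 < x) (ha : 0 < a) :
    x ^ a * Gamma (x + 1) ≤ Gamma (x + 1 + a) := by
  have hlog : log (Gamma (x + 1)) - log (Gamma x) = log x := by
    rw [Gamma_add_one hx.ne', log_mul hx.ne' (Gamma_pos_of_pos hx).ne', add_sub_cancel_right]
  have hslope := convexOn_log_Gamma.slope_mono_adjacent (x := x) (y := x + 1) (z := x + 1 + a)
    hx (by simp only [Set.mem_Ioi]; linarith) (by linarith) (by linarith)
  simp only [Function.comp_apply, hlog, add_sub_cancel_left, div_one] at hslope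
  rw [← log_le_log_iff (by positivity) (Gamma_pos_of_pos (by linarith)),
    log_mul (by positivity) (Gamma_pos_of_pos (by linarith)).ne', log_rpow hx,
    ← le_sub_iff_add_le, mul_comm, ← le_div_iff₀ ha]
  exact hslope

theorem tendsto_Gamma_div_Gamma_add {a : ℝ} (ha : 0 < a) :
    Tendsto (fun x => Gamma x / Gamma (x + a)) atTop (𝓝 0) := by
  have hnonneg : ∀ᶠ x in atTop, 0 ≤ Gamma x / Gamma (x + a) := by
    filter_upwards [eventually_gt_atTop 0] with x hx
    exact div_nonneg (Gamma_pos_of_pos hx).le (Gamma_pos_of_pos (by linarith)).le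
  have hbound : ∀ᶠ x in atTop, Gamma x / Gamma (x + a) ≤ (x - 1) ^ (-a) := by
    filter_upwards [eventually_gt_atTop 1] with x hx
    have h := rpow_mul_Gamma_le_Gamma_add (sub_pos.2 hx) ha
    rw [sub_add_cancel] at h
    rw [div_le_iff₀ (Gamma_pos_of_pos (by linarith)), rpow_neg (by linarith),
      le_inv_mul_iff₀ (by positivity)]
    exact h
  exact squeeze_zero' hnonneg hbound
    ((tendsto_rpow_neg_atTop ha).comp (tendsto_atTop_add_const_right _ (-1) tendsto_id))

end Real

theorem summable_pow_div_Gamma {α β : ℝ} (hα : 0 < α) (hβ : 0 < β) (r : ℝ) :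
    Summable fun k : ℕ => r ^ k / Gamma (β + α * k) := by
  have hΓ (k : ℕ) : 0 < Gamma (β + α * k) := Gamma_pos_of_pos (by positivity)
  set c : ℕ → ℝ := fun k => (Gamma (β + α * k))⁻¹
  have hratio : Tendsto (fun k => ‖c k.succ‖ / ‖c k‖) atTop (𝓝 0) := by
    have hlin : Tendsto (fun k : ℕ => β + α * k) atTop atTop :=
      tendsto_atTop_add_const_left _ _ (tendsto_natCast_atTop_atTop.const_mul_atTop hα)
    refine ((tendsto_Gamma_div_Gamma_add hα).comp hlin).congr fun k => ?_
    rw [Function.comp_apply, norm_inv, norm_inv, norm_of_nonneg (hΓ _).le,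
      norm_of_nonneg (hΓ _).le, inv_div_inv, Nat.cast_succ, mul_add_one, add_assoc]
  have hradius : (FormalMultilinearSeries.ofScalars ℝ c).radius = ⊤ :=
    FormalMultilinearSeries.ofScalars_radius_eq_top_of_tendsto ℝ c
      (Eventually.of_forall fun k => inv_ne_zero (hΓ k).ne') hratio
  refine .of_norm_bounded ((FormalMultilinearSeries.ofScalars ℝ c).summable_norm_mul_pow
    (r := ‖r‖₊) (hradius ▸ ENNReal.coe_lt_top)) fun k => ?_
  simp [c, div_eq_mul_inv, mul_comm, abs_of_pos (hΓ k)]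

theorem summable_nat_mul_pow_sub_one_div_Gamma {α β : ℝ} (hα : 0 < α) (hβ : 0 < β) {r : ℝ}
    (hr : 0 ≤ r) : Summable fun k : ℕ => k * r ^ (k - 1) / Gamma (β + α * k) := by
  refine (summable_pow_div_Gamma hα hβ (2 * (r + 1))).of_nonneg_of_le
    (fun k => div_nonneg (by positivity) (Gamma_pos_of_pos (by positivity)).le) fun k => ?_
  gcongr
  rw [mul_pow]
  gcongr
  · exact_mod_cast Nat.lt_two_pow_self.le
  · calc r ^ (k - 1) ≤ (r + 1) ^ (k - 1) := by gcongr; linarith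
      _ ≤ (r + 1) ^ k := pow_le_pow_right₀ (by linarith) (Nat.sub_le k 1)

theorem Complex.Gamma_ofReal_add_mul_natCast (α β : ℝ) (k : ℕ) :
    Complex.Gamma (β + α * k) = Real.Gamma (β + α * k) := by
  rw [← Complex.Gamma_ofReal]; push_cast; rfl

theorem Complex.natCast_succ_div_Gamma_one_add_mul {α : ℂ} (hα : α ≠ 0) (k : ℕ) :
    ((k + 1 : ℕ) : ℂ) / Complex.Gamma (1 + α * (k + 1 : ℕ)) =
      (α * Complex.Gamma (α + α * k))⁻¹ := by
  have hs : α + α * k ≠ 0 := by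
    rw [add_comm, ← mul_add_one]; exact mul_ne_zero hα (Nat.cast_add_one_ne_zero k)
  rw [show 1 + α * (k + 1 : ℕ) = (α + α * k) + 1 by push_cast; ring, Complex.Gamma_add_one _ hs,
    show (α + α * k) * Complex.Gamma (α + α * k) =
      ((k + 1 : ℕ) : ℂ) * (α * Complex.Gamma (α + α * k)) by push_cast; ring,
    div_mul_cancel_left₀ (Nat.cast_ne_zero.2 k.succ_ne_zero)]

theorem hasDerivAt_mittagLeffler_one {α : ℝ} (hα : 0 < α) (w : ℂ) :
    HasDerivAt (mittagLeffler α 1) (mittagLeffler α α w / α) w := by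
  set R := ‖w‖ + 1
  have hw : w ∈ Metric.ball 0 R := mem_ball_zero_iff.2 (by simp [R])
  have hterm (k : ℕ) (y : ℂ) : HasDerivAt (fun y : ℂ => y ^ k / Complex.Gamma (1 + α * k))
      (k * y ^ (k - 1) / Complex.Gamma (1 + α * k)) y := by
    simpa using (hasDerivAt_pow k y).div_const _
  have hbound (k : ℕ) (y : ℂ) (hy : y ∈ Metric.ball 0 R) :
      ‖k * y ^ (k - 1) / Complex.Gamma (1 + α * k)‖ ≤ k * R ^ (k - 1) / Gamma (1 + α * k) := by
    rw [← Complex.ofReal_one, Complex.Gamma_ofReal_add_mul_natCast, norm_div, norm_mul, norm_pow,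
      Complex.norm_natCast, Complex.norm_real, norm_of_nonneg (Gamma_pos_of_pos (by positivity)).le]
    gcongr
    exact (mem_ball_zero_iff.1 hy).le
  have hsummable := summable_nat_mul_pow_sub_one_div_Gamma hα one_pos (by positivity : 0 ≤ R)
  have hzero : Summable fun k : ℕ => (0 : ℂ) ^ k / Complex.Gamma (1 + α * k) :=
    (hasSum_single 0 fun k hk => by simp [hk]).summable
  refine (hasDerivAt_tsum_of_isPreconnected hsummable Metric.isOpen_ball
    (convex_ball 0 R).isPreconnected (fun k y _ => hterm k y) hbound
    (Metric.mem_ball_self (by positivity)) hzero hw).congr_deriv ?_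
  rw [Summable.tsum_eq_zero_add (.of_norm_bounded hsummable fun k => hbound k w hw),
    mittagLeffler, ← tsum_div_const]
  simp only [CharP.cast_eq_zero, zero_mul, zero_div, zero_add, add_tsub_cancel_right]
  refine tsum_congr fun k => ?_
  rw [mul_div_right_comm,
    Complex.natCast_succ_div_Gamma_one_add_mul (Complex.ofReal_ne_zero.2 hα.ne')]
  ring

theorem deriv_mittagLeffler (α : ℝ) (hα : α ∈ Set.Ioc (0 : ℝ) 1) (l : ℂ)
    (z : ℝ) (hz : 0 < z) :
    HasDerivAt (fun t : ℝ => mittagLeffler (α : ℂ) 1 (l * ((t ^ α : ℝ) : ℂ)))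
      (l * ((z ^ (α - 1) : ℝ) : ℂ) * mittagLeffler (α : ℂ) (α : ℂ) (l * ((z ^ α : ℝ) : ℂ)))
      z := by
  have hinner :
      HasDerivAt (fun t : ℝ => l * ((t ^ α : ℝ) : ℂ)) (l * ((α * z ^ (α - 1) : ℝ) : ℂ)) z :=
    (hasDerivAt_rpow_const (Or.inl hz.ne')).ofReal_comp.const_mul l
  refine ((hasDerivAt_mittagLeffler_one hα.1 _).comp z hinner).congr_deriv ?_
  have hα0 : (α : ℂ) ≠ 0 := Complex.ofReal_ne_zero.2 hα.1.ne'
  push_cast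
  field_simp
end

section
/- Let A generate a strongly continuous semigroup (T_t)_{t≥0} on a real Banach space X with growth bound ‖T_s x‖ ≤ exp(s·ω)·‖x‖ for all s ≥ 0, x ∈ D(A), where ω ≤ 0. Let α ∈ (0,1), β ∈ (0,1], and define S_t x = ∫_0^∞ Ψ_{−α,β−α}(z)·T_{t^α z} x dz via the subordination formula, where Ψ is the Wright function. Then ‖S_t x‖ ≤ E_{α,β}(t^α ω)·‖x‖ for all t ≥ 0 and x ∈ D(A). -/
open Filter Topology MeasureTheory

/-- Real two-parameter Mittag-Leffler function. -/
noncomputable def mittagLefflerR (α β w : ℝ) : ℝ :=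
  ∑' k : ℕ, w ^ k / Real.Gamma (β + α * k)

/-- Real Wright function. -/
noncomputable def wrightR (μ β : ℝ) (z : ℝ) : ℝ :=
  ∑' k : ℕ, (-z) ^ k / (Real.Gamma ((k : ℝ) + 1) * Real.Gamma (β + μ * k))

theorem fractional_semigroup_bound {X : Type*} [NormedAddCommGroup X] [NormedSpace ℝ X]
    [CompleteSpace X]
    (T : ℝ → X →L[ℝ] X)
    (hT0 : T 0 = 1)
    (hTsem : ∀ s t : ℝ, 0 ≤ s → 0 ≤ t → T (s + t) = T s ∘L T t)
    (hTcont : ∀ x : X, Tendsto (fun t => T t x) (𝓝[>] (0 : ℝ)) (𝓝 x))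
    (domA : Set X) (A : X → X)
    (hA : ∀ x ∈ domA,
      Tendsto (fun h : ℝ => h⁻¹ • (T h x - x)) (𝓝[>] (0 : ℝ)) (𝓝 (A x)))
    (ω : ℝ) (hω : ω ≤ 0)
    (hgrowth : ∀ s : ℝ, 0 ≤ s → ∀ x ∈ domA, ‖T s x‖ ≤ Real.exp (s * ω) * ‖x‖)
    (α β : ℝ) (hα : α ∈ Set.Ioo (0 : ℝ) 1) (hβ : β ∈ Set.Ioc (0 : ℝ) 1)
    (hΨnonneg : ∀ z : ℝ, 0 ≤ z → 0 ≤ wrightR (-α) (β - α) z)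
    (hLaplace : ∀ w : ℝ, w ≤ 0 →
      (∫ z in Set.Ioi (0 : ℝ), wrightR (-α) (β - α) z * Real.exp (z * w))
        = mittagLefflerR α β w)
    (hInt : ∀ t : ℝ, 0 ≤ t → ∀ x ∈ domA,
      IntegrableOn (fun z : ℝ => wrightR (-α) (β - α) z • T (t ^ α * z) x)
        (Set.Ioi (0 : ℝ))) :
    ∀ t : ℝ, 0 ≤ t → ∀ x ∈ domA,
      ‖∫ z in Set.Ioi (0 : ℝ), wrightR (-α) (β - α) z • T (t ^ α * z) x‖
        ≤ mittagLefflerR α β (t ^ α * ω) * ‖x‖ := by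
  intro t ht x hx
  rcases eq_or_ne x 0 with rfl | hx0
  · simp
  set Ψ : ℝ → ℝ := fun z => wrightR (-α) (β - α) z with hΨdef
  set w : ℝ := t ^ α * ω with hwdef
  have hta : (0 : ℝ) ≤ t ^ α := Real.rpow_nonneg ht α
  have hw : w ≤ 0 := mul_nonpos_of_nonneg_of_nonpos hta hω
  -- Ψ is integrable on Ioi 0, via hInt at t = 0
  have h0 : IntegrableOn (fun z : ℝ => Ψ z • x) (Set.Ioi (0 : ℝ)) := by
    have := hInt 0 le_rfl x hx
    simpa [Real.zero_rpow (ne_of_gt hα.1), hT0] using this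
  have hΨint : IntegrableOn Ψ (Set.Ioi (0 : ℝ)) :=
    (integrable_smul_const hx0).mp h0
  -- the dominating function
  have hhint : IntegrableOn (fun z : ℝ => Ψ z * Real.exp (z * w)) (Set.Ioi (0 : ℝ)) := by
    refine Integrable.mono hΨint
      (hΨint.aestronglyMeasurable.mul
        ((Real.continuous_exp.comp (continuous_id.mul continuous_const)).aestronglyMeasurable))
      ?_
    filter_upwards [ae_restrict_mem measurableSet_Ioi] with z hz
    have hz0 : (0 : ℝ) ≤ z := le_of_lt hz
    have hΨ0 : 0 ≤ Ψ z := hΨnonneg z hz0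
    have hexp : Real.exp (z * w) ≤ 1 := by
      rw [← Real.exp_zero]
      exact Real.exp_le_exp.mpr (mul_nonpos_of_nonneg_of_nonpos hz0 hw)
    rw [Real.norm_eq_abs, Real.norm_eq_abs, abs_of_nonneg hΨ0,
      abs_of_nonneg (mul_nonneg hΨ0 (Real.exp_pos _).le)]
    calc Ψ z * Real.exp (z * w) ≤ Ψ z * 1 := by
          exact mul_le_mul_of_nonneg_left hexp hΨ0
      _ = Ψ z := mul_one _
  calc ‖∫ z in Set.Ioi (0 : ℝ), Ψ z • T (t ^ α * z) x‖
      ≤ ∫ z in Set.Ioi (0 : ℝ), ‖Ψ z • T (t ^ α * z) x‖ :=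
        norm_integral_le_integral_norm _
    _ ≤ ∫ z in Set.Ioi (0 : ℝ), Ψ z * Real.exp (z * w) * ‖x‖ := by
        refine setIntegral_mono_on (hInt t ht x hx).norm (hhint.mul_const _)
          measurableSet_Ioi ?_
        intro z hz
        have hz0 : (0 : ℝ) ≤ z := le_of_lt hz
        have hΨ0 : 0 ≤ Ψ z := hΨnonneg z hz0
        rw [norm_smul, Real.norm_eq_abs, abs_of_nonneg hΨ0]
        have hTb : ‖T (t ^ α * z) x‖ ≤ Real.exp ((t ^ α * z) * ω) * ‖x‖ :=
          hgrowth _ (mul_nonneg hta hz0) x hx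
        have hrw : (t ^ α * z) * ω = z * w := by rw [hwdef]; ring
        rw [hrw] at hTb
        calc Ψ z * ‖T (t ^ α * z) x‖
            ≤ Ψ z * (Real.exp (z * w) * ‖x‖) := mul_le_mul_of_nonneg_left hTb hΨ0
          _ = Ψ z * Real.exp (z * w) * ‖x‖ := by ring
    _ = (∫ z in Set.Ioi (0 : ℝ), Ψ z * Real.exp (z * w)) * ‖x‖ :=
        integral_mul_const _ _
    _ = mittagLefflerR α β (t ^ α * ω) * ‖x‖ := by
        rw [hLaplace w hw]
end

section
/- For α ∈ (0,1], λ ∈ ℝ, and t ≥ 0, the function u(t) = E_{α,1}(λ t^α) satisfies the Volterra integral equation u(t) = 1 + (λ/Γ(α)) ∫_0^t (t−s)^{α−1} u(s) ds. -/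
open Real Filter MeasureTheory

theorem Real.Gamma_add_one_sub_mul_rpow_le {x a : ℝ} (hx : 0 < x) (ha₀ : 0 ≤ a) (ha₁ : a ≤ 1) :
    Gamma (x + 1 - a) * x ^ a ≤ Gamma (x + 1) := by
  have hlog : log (Gamma x) = log (Gamma (x + 1)) - log x := by
    rw [Gamma_add_one hx.ne', log_mul hx.ne' (Gamma_pos_of_pos hx).ne']
    ring
  have hconv := convexOn_log_Gamma.2 (Set.mem_Ioi.2 hx) (Set.mem_Ioi.2 (by linarith : 0 < x + 1))
    ha₀ (sub_nonneg.2 ha₁) (add_sub_cancel a 1)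
  simp only [Function.comp_apply, smul_eq_mul] at hconv
  rw [show a * x + (1 - a) * (x + 1) = x + 1 - a by ring, hlog] at hconv
  have hΓ : 0 < Gamma (x + 1 - a) := Gamma_pos_of_pos (by linarith)
  rw [← log_le_log_iff (by positivity) (Gamma_pos_of_pos (by linarith)),
    log_mul hΓ.ne' (rpow_pos_of_pos hx a).ne', log_rpow hx]
  linarith

theorem summable_mittagLeffler_series {α : ℝ} (hα₀ : 0 < α) (hα₁ : α ≤ 1) (β w : ℝ) :
    Summable fun k : ℕ => w ^ k / Gamma (β + α * k) := by
  have hlin : Tendsto (fun k : ℕ => β + α * k) atTop atTop :=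
    tendsto_atTop_add_const_left _ _ (tendsto_natCast_atTop_atTop.const_mul_atTop hα₀)
  have hgrowth : Tendsto (fun k : ℕ => (β + α * k + (α - 1)) ^ α) atTop atTop :=
    (tendsto_rpow_atTop hα₀).comp (tendsto_atTop_add_const_right _ _ hlin)
  refine summable_of_ratio_norm_eventually_le (r := 1 / 2) (by norm_num) ?_
  filter_upwards [hlin.eventually_ge_atTop 1, hgrowth.eventually_ge_atTop (2 * |w|)]
    with k hk₁ hkw
  set s := β + α * k
  have hx : 0 < s + (α - 1) := by linarith
  have hΓs : 0 < Gamma s := Gamma_pos_of_pos (by linarith)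
  have hp : 0 < (s + (α - 1)) ^ α := rpow_pos_of_pos hx α
  have hΓ := Gamma_add_one_sub_mul_rpow_le hx hα₀.le hα₁
  rw [show s + (α - 1) + 1 - α = s by ring,
    show s + (α - 1) + 1 = β + α * (k + 1 : ℕ) by simp only [s]; push_cast; ring] at hΓ
  rw [norm_div, norm_div, norm_pow, norm_pow, norm_of_nonneg hΓs.le,
    norm_of_nonneg ((mul_pos hΓs hp).le.trans hΓ), Real.norm_eq_abs]
  calc |w| ^ (k + 1) / Gamma (β + α * (k + 1 : ℕ))
      ≤ |w| ^ (k + 1) / (Gamma s * (s + (α - 1)) ^ α) := by gcongr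
    _ = |w| / (s + (α - 1)) ^ α * (|w| ^ k / Gamma s) := by
      rw [pow_succ]; field_simp
    _ ≤ 1 / 2 * (|w| ^ k / Gamma s) := by
      gcongr ?_ * _
      rw [div_le_iff₀ hp]
      linarith

theorem mittagLefflerR_eq_inv_Gamma_add_mul {α : ℝ} (hα₀ : 0 < α) (hα₁ : α ≤ 1) (β w : ℝ) :
    mittagLefflerR α β w = (Gamma β)⁻¹ + w * mittagLefflerR α (α + β) w := by
  rw [mittagLefflerR, (summable_mittagLeffler_series hα₀ hα₁ β w).tsum_eq_zero_add,
    mittagLefflerR, ← tsum_mul_left]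
  congr 1
  · simp
  · congr 1 with k
    rw [pow_succ, show β + α * (k + 1 : ℕ) = α + β + α * k by push_cast; ring]
    ring

theorem integral_sub_rpow_mul_rpow {a c t : ℝ} (ha : 0 < a) (hc : -1 < c) (ht : 0 < t) :
    ∫ s in (0 : ℝ)..t, (t - s) ^ (a - 1) * s ^ c
      = Gamma a * Gamma (c + 1) / Gamma (a + c + 1) * t ^ (a + c) := by
  have hC := Complex.betaIntegral_scaled (c + 1) a ht
  rw [Complex.betaIntegral_eq_Gamma_mul_div _ _ (by simp; linarith) (by simpa)] at hC
  have hcast : ∀ s ∈ Set.uIcc 0 t, (((t - s) ^ (a - 1) * s ^ c : ℝ) : ℂ)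
      = (s : ℂ) ^ ((c + 1 : ℂ) - 1) * ((t : ℂ) - s) ^ ((a : ℂ) - 1) := by
    intro s hs
    rw [Set.uIcc_of_le ht.le] at hs
    rw [Complex.ofReal_mul, Complex.ofReal_cpow (sub_nonneg.2 hs.2), Complex.ofReal_cpow hs.1,
      mul_comm, add_sub_cancel_right]
    push_cast
    rfl
  rw [← Complex.ofReal_inj, ← intervalIntegral.integral_ofReal,
    intervalIntegral.integral_congr hcast, hC,
    show (c + 1 : ℂ) + a - 1 = ((a + c : ℝ) : ℂ) by push_cast; ring,
    show (c + 1 : ℂ) + a = ((a + c + 1 : ℝ) : ℂ) by push_cast; ring,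
    show (c + 1 : ℂ) = ((c + 1 : ℝ) : ℂ) by push_cast; ring,
    ← Complex.ofReal_cpow ht.le, Complex.Gamma_ofReal, Complex.Gamma_ofReal, Complex.Gamma_ofReal]
  push_cast
  ring

theorem intervalIntegrable_sub_rpow_mul_rpow {a c t : ℝ} (ha : 0 < a) (hc : -1 < c)
    (ht : 0 < t) : IntervalIntegrable (fun s => (t - s) ^ (a - 1) * s ^ c) volume 0 t := by
  -- A non-integrable function has integral `0` by convention, and this integral is positive.
  refine intervalIntegral.intervalIntegrable_of_integral_ne_zero ?_
  rw [integral_sub_rpow_mul_rpow ha hc ht]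
  have := Gamma_pos_of_pos ha
  have := Gamma_pos_of_pos (by linarith : 0 < c + 1)
  have := Gamma_pos_of_pos (by linarith : 0 < a + c + 1)
  positivity

lemma mul_rpow_pow {x : ℝ} (hx : 0 ≤ x) (l α : ℝ) (k : ℕ) :
    (l * x ^ α) ^ k = l ^ k * x ^ (α * k) := by
  rw [mul_pow, ← rpow_natCast (x ^ α), ← rpow_mul hx]

section

variable {α t : ℝ}

theorem integral_sub_rpow_mul_mittagLeffler_term (hα : 0 < α) (ht : 0 < t) (l : ℝ) (k : ℕ) :
    ∫ s in (0 : ℝ)..t, (t - s) ^ (α - 1) * ((l * s ^ α) ^ k / Gamma (1 + α * k))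
      = Gamma α * t ^ α * ((l * t ^ α) ^ k / Gamma (α + 1 + α * k)) := by
  have hk : 0 ≤ α * k := by positivity
  have hterm : ∀ s ∈ Set.uIcc 0 t, (t - s) ^ (α - 1) * ((l * s ^ α) ^ k / Gamma (1 + α * k))
      = l ^ k / Gamma (1 + α * k) * ((t - s) ^ (α - 1) * s ^ (α * k)) := by
    intro s hs
    rw [Set.uIcc_of_le ht.le] at hs
    rw [mul_rpow_pow hs.1]
    ring
  rw [intervalIntegral.integral_congr hterm, intervalIntegral.integral_const_mul,
    integral_sub_rpow_mul_rpow hα (by linarith) ht, mul_rpow_pow ht.le, rpow_add ht,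
    add_comm (α * k) 1, add_right_comm α (α * k)]
  have := (Gamma_pos_of_pos (by linarith : 0 < 1 + α * k)).ne'
  field_simp

theorem norm_mittagLeffler_term (hα : 0 ≤ α) {s : ℝ} (hs : s ∈ Set.Icc 0 t) (l : ℝ) (k : ℕ) :
    ‖(t - s) ^ (α - 1) * ((l * s ^ α) ^ k / Gamma (1 + α * k))‖
      = (t - s) ^ (α - 1) * ((|l| * s ^ α) ^ k / Gamma (1 + α * k)) := by
  have hΓ : 0 < Gamma (1 + α * k) := Gamma_pos_of_pos (by positivity)
  rw [norm_mul, norm_div, norm_pow, norm_mul, norm_of_nonneg (rpow_nonneg (sub_nonneg.2 hs.2) _),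
    norm_of_nonneg (rpow_nonneg hs.1 _), norm_of_nonneg hΓ.le, Real.norm_eq_abs]

theorem integral_sub_rpow_mul_mittagLefflerR (hα₀ : 0 < α) (hα₁ : α ≤ 1) (ht : 0 ≤ t)
    (l : ℝ) :
    ∫ s in (0 : ℝ)..t, (t - s) ^ (α - 1) * mittagLefflerR α 1 (l * s ^ α)
      = Gamma α * t ^ α * mittagLefflerR α (α + 1) (l * t ^ α) := by
  rcases ht.eq_or_lt with rfl | ht
  · simp [zero_rpow hα₀.ne']
  set f : ℕ → ℝ → ℝ := fun k s => (t - s) ^ (α - 1) * ((l * s ^ α) ^ k / Gamma (1 + α * k))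
  have hint : ∀ k, IntegrableOn (f k) (Set.Ioc 0 t) := by
    intro k
    have hbase := intervalIntegrable_sub_rpow_mul_rpow (c := α * k) hα₀
      (neg_one_lt_zero.trans_le (by positivity)) ht
    refine IntegrableOn.congr_fun (hbase.1.const_mul (l ^ k / Gamma (1 + α * k)))
      (fun s hs => ?_) measurableSet_Ioc
    simp only [f, mul_rpow_pow hs.1.le]
    ring
  have hsum : Summable fun k => ∫ s in Set.Ioc 0 t, ‖f k s‖ := by
    refine ((summable_mittagLeffler_series hα₀ hα₁ (α + 1) (|l| * t ^ α)).mul_left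
      (Gamma α * t ^ α)).congr fun k => ?_
    rw [setIntegral_congr_fun measurableSet_Ioc
      fun s hs => norm_mittagLeffler_term hα₀.le (Set.Ioc_subset_Icc_self hs) l k,
      ← intervalIntegral.integral_of_le ht.le, integral_sub_rpow_mul_mittagLeffler_term hα₀ ht]
  calc ∫ s in (0 : ℝ)..t, (t - s) ^ (α - 1) * mittagLefflerR α 1 (l * s ^ α)
      = ∫ s in Set.Ioc 0 t, ∑' k, f k s := by
        simp only [intervalIntegral.integral_of_le ht.le, mittagLefflerR, ← tsum_mul_left, f]
    _ = ∑' k, ∫ s in Set.Ioc 0 t, f k s :=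
        (integral_tsum_of_summable_integral_norm hint hsum).symm
    _ = Gamma α * t ^ α * mittagLefflerR α (α + 1) (l * t ^ α) := by
        simp only [f, ← intervalIntegral.integral_of_le ht.le,
          integral_sub_rpow_mul_mittagLeffler_term hα₀ ht, tsum_mul_left, mittagLefflerR]

end

theorem mittagLeffler_volterra (α l : ℝ) (hα : α ∈ Set.Ioc (0 : ℝ) 1) :
    ∀ t : ℝ, 0 ≤ t →
      mittagLefflerR α 1 (l * t ^ α)
        = 1 + (l / Real.Gamma α) *
            ∫ s in (0 : ℝ)..t, (t - s) ^ (α - 1) * mittagLefflerR α 1 (l * s ^ α) := by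
  intro t ht
  rw [integral_sub_rpow_mul_mittagLefflerR hα.1 hα.2 ht,
    mittagLefflerR_eq_inv_Gamma_add_mul hα.1 hα.2, Gamma_one, inv_one]
  field_simp [(Gamma_pos_of_pos hα.1).ne']
end
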